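/- Let I be a Hausdorff, locally connected, first-countable topological space, P ⊆ I a closed subset, and Φ : I → I a homeomorphism with Φ(P) = P. Let η : [0,∞) → [0,∞) be a homeomorphism with η(t) < t for every t > 0. Let X := (I × [0,∞)) ∖ (P × {0}) with the subspace topology, let γ : X → X be the homeomorphism γ(x,t) = (Φ(x), η(t)), and let F : X → ℝ be a continuous proper map (preimages of compact sets are compact) satisfying F(γ(z)) = F(z) + 1 for all z ∈ X. Define f : I ∖ P → ℝ by f(x) := F(x,0) and set C := P ∪ { x ∈ I ∖ P : f(x) ≥ 0 }. Then C is a compact subset of I and P is contained in the topological interior of C. -/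

import Mathlib

/-!
The map `γ = Φ × η` shifts `F` by `1` and does not increase the height coordinate, so iterating
`γ` forwards or backwards moves any point of `X` into the compact fundamental domain
`F⁻¹[0, 1]` while controlling its height. Pulling back shows that the heights of `{F ≥ 0}` are
bounded; pushing forward over `P`, where the fundamental domain lies at heights `≥ m > 0`, shows
that `F > 0` on `P × (0, m)`. With the first fact, the intermediate value theorem on the vertical
fibre over a point of `C` yields a zero of `F`, so `C` lies in the projection of the compact set
`F⁻¹(0)`. With the second, since `F⁻¹(0)` is closed and misses `(p, 0)`, `F` has no zero on
`U × [0, ε) ∩ X` for a connected neighbourhood `U` of `p ∈ P`, and this connected set contains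
points where `F > 0`; hence `F(y, 0) > 0` for `y ∈ U ∖ P`.
-/

open Set Filter Topology Function
open scoped NNReal

section FundamentalDomain

variable {Y β : Type*} [Preorder β] {X : Set Y} {g : Y → Y} {F : Y → ℝ} {h : Y → β}

theorem apply_iterate_eq_add_of_mapsTo (hg : MapsTo g X X)
    (hF : ∀ z ∈ X, F (g z) = F z + 1) {z : Y} (hz : z ∈ X) (n : ℕ) :
    F (g^[n] z) = F z + n := by
  induction n with
  | zero => simp
  | succ n ih =>
    rw [iterate_succ_apply', hF _ (hg.iterate n hz), ih]
    push_cast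
    ring

theorem apply_iterate_le_of_mapsTo (hg : MapsTo g X X) (hh : ∀ z ∈ X, h (g z) ≤ h z)
    {z : Y} (hz : z ∈ X) (n : ℕ) : h (g^[n] z) ≤ h z := by
  induction n with
  | zero => exact le_rfl
  | succ n ih =>
    rw [iterate_succ_apply']
    exact (hh _ (hg.iterate n hz)).trans ih

theorem mem_upperBounds_of_fundamentalDomain {g' : Y → Y} (hinv : LeftInverse g g')
    (hg : MapsTo g X X) (hg' : MapsTo g' X X) (hF : ∀ z ∈ X, F (g z) = F z + 1)
    (hh : ∀ z ∈ X, h (g z) ≤ h z) {a : ℝ} {T : β}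
    (hT : T ∈ upperBounds (h '' (X ∩ F ⁻¹' Icc a (a + 1)))) :
    T ∈ upperBounds (h '' (X ∩ F ⁻¹' Ici a)) := by
  rintro _ ⟨z, ⟨hz, ha⟩, rfl⟩
  set n := ⌊F z - a⌋₊
  have hw : g'^[n] z ∈ X := hg'.iterate n hz
  have hzw : g^[n] (g'^[n] z) = z := hinv.iterate n z
  have hFw : F z = F (g'^[n] z) + n := by
    rw [← apply_iterate_eq_add_of_mapsTo hg hF hw, hzw]
  have hn₁ : (n : ℝ) ≤ F z - a := Nat.floor_le (sub_nonneg.2 ha)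
  have hn₂ : F z - a < n + 1 := Nat.lt_floor_add_one _
  calc h z = h (g^[n] (g'^[n] z)) := by rw [hzw]
    _ ≤ h (g'^[n] z) := apply_iterate_le_of_mapsTo hg hh hw n
    _ ≤ T := hT ⟨_, ⟨hw, by constructor <;> linarith⟩, rfl⟩

theorem mem_lowerBounds_of_fundamentalDomain (hg : MapsTo g X X)
    (hF : ∀ z ∈ X, F (g z) = F z + 1) (hh : ∀ z ∈ X, h (g z) ≤ h z) {a : ℝ} {m : β}
    (hm : m ∈ lowerBounds (h '' (X ∩ F ⁻¹' Icc a (a + 1)))) :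
    m ∈ lowerBounds (h '' (X ∩ F ⁻¹' Iic a)) := by
  rintro _ ⟨z, ⟨hz, ha⟩, rfl⟩
  set n := ⌈a - F z⌉₊
  have hFw : F (g^[n] z) = F z + n := apply_iterate_eq_add_of_mapsTo hg hF hz n
  have hn₁ : a - F z ≤ n := Nat.le_ceil _
  have hn₂ : (n : ℝ) < a - F z + 1 := Nat.ceil_lt_add_one (sub_nonneg.2 ha)
  calc m ≤ h (g^[n] z) := hm ⟨_, ⟨hg.iterate n hz, by constructor <;> linarith⟩, rfl⟩
    _ ≤ h z := apply_iterate_le_of_mapsTo hg hh hz n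

end FundamentalDomain

theorem NNReal.map_zero_of_lt_self {f : ℝ≥0 → ℝ≥0} (hf : Continuous f)
    (hlt : ∀ t, 0 < t → f t < t) : f 0 = 0 :=
  le_antisymm
    (le_of_tendsto_of_tendsto (b := 𝓝[>] (0 : ℝ≥0)) (g := id)
      ((hf.tendsto 0).mono_left nhdsWithin_le_nhds) (tendsto_id.mono_left nhdsWithin_le_nhds)
      (eventually_nhdsWithin_of_forall fun t ht => (hlt t ht).le))
    zero_le

theorem NNReal.map_le_self_of_lt_self {f : ℝ≥0 → ℝ≥0} (hf : Continuous f)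
    (hlt : ∀ t, 0 < t → f t < t) (t : ℝ≥0) : f t ≤ t := by
  rcases eq_zero_or_pos t with rfl | ht
  · exact (NNReal.map_zero_of_lt_self hf hlt).le
  · exact (hlt t ht).le

theorem mem_compl_prod_zero_of_le {I : Type*} {P : Set I} {x : I} {t₀ t : ℝ≥0}
    (h₀ : (x, t₀) ∈ (P ×ˢ {0})ᶜ) (ht : t₀ ≤ t) : (x, t) ∈ (P ×ˢ {0})ᶜ :=
  fun ⟨hx, ht0⟩ => h₀ ⟨hx, le_zero_iff.1 (ht.trans_eq (mem_singleton_iff.1 ht0))⟩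

def core {I : Type*} (P : Set I) (F : I × ℝ≥0 → ℝ) : Set I := P ∪ {x | x ∉ P ∧ 0 ≤ F (x, 0)}

section Core

variable {I : Type*} [TopologicalSpace I] {P : Set I} {F : I × ℝ≥0 → ℝ}

theorem exists_mem_zero_level_of_nonneg (hFc : ContinuousOn F (P ×ˢ {0})ᶜ) {T : ℝ≥0}
    (hT : T ∈ upperBounds (Prod.snd '' ((P ×ˢ {0})ᶜ ∩ F ⁻¹' Ici 0))) {x : I} {t₀ : ℝ≥0}
    (h₀ : (x, t₀) ∈ (P ×ˢ {0})ᶜ) (hF₀ : 0 ≤ F (x, t₀)) :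
    ∃ t, (x, t) ∈ (P ×ˢ {0})ᶜ ∩ F ⁻¹' {0} := by
  have hle : t₀ ≤ T + 1 := (hT ⟨_, ⟨h₀, hF₀⟩, rfl⟩).trans le_self_add
  have htop : F (x, T + 1) < 0 := by
    by_contra! h
    exact (lt_add_one T).not_ge (hT ⟨_, ⟨mem_compl_prod_zero_of_le h₀ hle, h⟩, rfl⟩)
  have hcont : ContinuousOn (fun t => F (x, t)) (Icc t₀ (T + 1)) :=
    hFc.comp (Continuous.continuousOn (by fun_prop))
      fun t ht => mem_compl_prod_zero_of_le h₀ ht.1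
  obtain ⟨t, ht, hFt⟩ := intermediate_value_Icc' hle hcont ⟨htop.le, hF₀⟩
  exact ⟨t, mem_compl_prod_zero_of_le h₀ ht.1, hFt⟩

theorem isCompact_core (hP : IsClosed P) (hFc : ContinuousOn F (P ×ˢ {0})ᶜ)
    (hK : IsCompact ((P ×ˢ {0})ᶜ ∩ F ⁻¹' {0}))
    (hbdd : BddAbove (Prod.snd '' ((P ×ˢ {0})ᶜ ∩ F ⁻¹' Ici 0)))
    (hpos : ∀ p ∈ P, ∃ᶠ t in 𝓝[>] 0, 0 < F (p, t)) :
    IsCompact (core P F) := by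
  obtain ⟨T, hT⟩ := hbdd
  have hclosed : IsClosed (core P F) := by
    have hcompl : (core P F)ᶜ = Pᶜ ∩ (fun x => F (x, 0)) ⁻¹' Iio 0 := by
      ext x
      by_cases hx : x ∈ P <;> simp [core, hx]
    rw [← isOpen_compl_iff, hcompl]
    exact (hFc.comp (Continuous.continuousOn (by fun_prop)) fun x (hx : x ∈ Pᶜ) h => hx h.1)
      |>.isOpen_inter_preimage hP.isOpen_compl isOpen_Iio
  refine (hK.image continuous_fst).of_isClosed_subset hclosed ?_
  rintro x (hx | ⟨hx, hF⟩)
  · obtain ⟨t, hFt, ht⟩ := ((hpos x hx).and_eventually self_mem_nhdsWithin).exists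
    obtain ⟨s, hs⟩ := exists_mem_zero_level_of_nonneg hFc hT
      (fun h => (ne_of_gt ht) h.2) hFt.le
    exact ⟨_, hs, rfl⟩
  · obtain ⟨s, hs⟩ := exists_mem_zero_level_of_nonneg hFc hT (fun h => hx h.1) hF
    exact ⟨_, hs, rfl⟩

theorem subset_interior_core [T2Space I] [LocallyConnectedSpace I]
    (hFc : ContinuousOn F (P ×ˢ {0})ᶜ) (hK : IsCompact ((P ×ˢ {0})ᶜ ∩ F ⁻¹' {0}))
    (hpos : ∀ p ∈ P, ∃ᶠ t in 𝓝[>] 0, 0 < F (p, t)) :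
    P ⊆ interior (core P F) := by
  intro p hp
  have hp0 : (p, (0 : ℝ≥0)) ∈ ((P ×ˢ {0})ᶜ ∩ F ⁻¹' {0})ᶜ := fun h => h.1 ⟨hp, rfl⟩
  obtain ⟨u, hu, v, hv, huv⟩ := mem_nhds_prod_iff.1 (hK.isClosed.isOpen_compl.mem_nhds hp0)
  obtain ⟨U, ⟨hUo, hpU, hUc⟩, hUu⟩ := (LocallyConnectedSpace.open_connected_basis p).mem_iff.1 hu
  obtain ⟨ε, hε, hεv⟩ := NNReal.nhds_zero_basis.mem_iff.1 hv
  set W := U ×ˢ Iio ε ∩ (P ×ˢ {0})ᶜ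
  have hW : IsPreconnected W := by
    refine (hUc.isPreconnected.prod isPreconnected_Ioo).subset_closure (s := U ×ˢ Ioo 0 ε) ?_ ?_
    · rintro ⟨y, t⟩ ⟨hy, ht⟩
      exact ⟨⟨hy, ht.2⟩, fun h => ht.1.ne' h.2⟩
    · rintro ⟨y, t⟩ ⟨⟨hy, ht⟩, -⟩
      rw [closure_prod_eq, closure_Ioo hε.ne]
      exact ⟨subset_closure hy, zero_le, ht.le⟩
  have hF0 : ∀ z ∈ W, F z ≠ 0 := fun z hz h0 => huv ⟨hUu hz.1.1, hεv hz.1.2⟩ ⟨hz.2, h0⟩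
  obtain ⟨t, hFt, ht⟩ := ((hpos p hp).and_eventually (Ioo_mem_nhdsGT hε)).exists
  refine mem_interior.2 ⟨U, fun y hy => ?_, hUo, hpU⟩
  by_cases hyP : y ∈ P
  · exact Or.inl hyP
  refine Or.inr ⟨hyP, not_lt.1 fun hneg => ?_⟩
  obtain ⟨z, hz, hFz⟩ := hW.intermediate_value (a := (y, 0)) (b := (p, t))
    ⟨⟨hy, hε⟩, fun h => hyP h.1⟩ ⟨⟨hpU, ht.2⟩, fun h => ht.1.ne' h.2⟩
    (hFc.mono inter_subset_right) ⟨hneg.le, hFt.le⟩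
  exact hF0 z hz hFz

end Core

section Dynamics

variable {I : Type*} [TopologicalSpace I] {P : Set I} {Φ : I ≃ₜ I} {η : ℝ≥0 ≃ₜ ℝ≥0}
  {F : I × ℝ≥0 → ℝ}

theorem mapsTo_prodMap_compl_prod_zero (hΦP : Φ '' P = P) (hη0 : η 0 = 0) :
    MapsTo (Prod.map Φ η) (P ×ˢ {0})ᶜ (P ×ˢ {0})ᶜ :=
  SurjOn.mapsTo_compl (by rw [SurjOn, prodMap_image_prod, hΦP, image_singleton, hη0])
    (Φ.injective.prodMap η.injective)

theorem bddAbove_snd_image_inter_preimage_Ici (hΦP : Φ '' P = P) (hη : ∀ t, 0 < t → η t < t)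
    (hK : IsCompact ((P ×ˢ {0})ᶜ ∩ F ⁻¹' Icc 0 1))
    (hFeq : ∀ z ∈ (P ×ˢ {0})ᶜ, F (Φ z.1, η z.2) = F z + 1) :
    BddAbove (Prod.snd '' ((P ×ˢ {0})ᶜ ∩ F ⁻¹' Ici 0)) := by
  have hη0 : η 0 = 0 := NNReal.map_zero_of_lt_self η.continuous hη
  have hΦP' : Φ.symm '' P = P := by
    conv_lhs => rw [← hΦP]
    exact Φ.symm_image_image P
  obtain ⟨T, hT⟩ := hK.bddAbove_image continuous_snd.continuousOn
  refine ⟨T, mem_upperBounds_of_fundamentalDomain (g' := Prod.map Φ.symm η.symm)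
    (fun z => Prod.ext (Φ.apply_symm_apply _) (η.apply_symm_apply _))
    (mapsTo_prodMap_compl_prod_zero hΦP hη0)
    (mapsTo_prodMap_compl_prod_zero hΦP' (η.symm_apply_eq.2 hη0.symm)) hFeq
    (fun z _ => NNReal.map_le_self_of_lt_self η.continuous hη z.2) ?_⟩
  rwa [zero_add]

theorem eventually_nhdsGT_zero_pos_of_mem (hP : IsClosed P) (hΦP : Φ '' P = P)
    (hη : ∀ t, 0 < t → η t < t) (hK : IsCompact ((P ×ˢ {0})ᶜ ∩ F ⁻¹' Icc 0 1))
    (hFeq : ∀ z ∈ (P ×ˢ {0})ᶜ, F (Φ z.1, η z.2) = F z + 1) :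
    ∀ p ∈ P, ∀ᶠ t in 𝓝[>] 0, 0 < F (p, t) := by
  set X : Set (I × ℝ≥0) := (P ×ˢ {0})ᶜ ∩ P ×ˢ univ
  have hKP : IsCompact (X ∩ F ⁻¹' Icc 0 1) := by
    rw [inter_right_comm]
    exact hK.inter_right (hP.prod isClosed_univ)
  have h0 : (0 : ℝ≥0) ∉ Prod.snd '' (X ∩ F ⁻¹' Icc 0 1) :=
    fun ⟨z, ⟨⟨hz, hzP, _⟩, _⟩, hz0⟩ => hz ⟨hzP, hz0⟩
  obtain ⟨m, hm0, hm⟩ := NNReal.nhds_zero_basis.mem_iff.1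
    ((hKP.image continuous_snd).isClosed.isOpen_compl.mem_nhds h0)
  have hη0 : η 0 = 0 := NNReal.map_zero_of_lt_self η.continuous hη
  have hlow : m ∈ lowerBounds (Prod.snd '' (X ∩ F ⁻¹' Iic 0)) :=
    mem_lowerBounds_of_fundamentalDomain
      ((mapsTo_prodMap_compl_prod_zero hΦP hη0).inter_inter
        ((hΦP ▸ mapsTo_image Φ P).prodMap (mapsTo_univ η univ)))
      (fun z hz => hFeq z hz.1)
      (fun z _ => NNReal.map_le_self_of_lt_self η.continuous hη z.2)
      (fun t ht => not_lt.1 fun htm => hm htm (by rwa [zero_add] at ht))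
  intro p hp
  filter_upwards [Ioo_mem_nhdsGT hm0] with t ht
  by_contra! hneg
  exact ht.2.not_ge (hlow ⟨(p, t), ⟨⟨fun h => ht.1.ne' h.2, hp, trivial⟩, hneg⟩, rfl⟩)

end Dynamics

theorem stmt14_general {I : Type*} [TopologicalSpace I] [T2Space I]
    [LocallyConnectedSpace I]
    (P : Set I) (hP : IsClosed P)
    (Φ : I ≃ₜ I) (hΦP : Φ '' P = P)
    (η : ℝ≥0 ≃ₜ ℝ≥0) (hη : ∀ t : ℝ≥0, 0 < t → η t < t)
    (Xs : Set (I × ℝ≥0)) (hXs : Xs = {z : I × ℝ≥0 | ¬(z.1 ∈ P ∧ z.2 = 0)})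
    (F : I × ℝ≥0 → ℝ)
    (hFc : ContinuousOn F Xs)
    (hFprop : ∀ K : Set ℝ, IsCompact K → IsCompact (Xs ∩ F ⁻¹' K))
    (hFeq : ∀ z ∈ Xs, F (Φ z.1, η z.2) = F z + 1)
    (C : Set I) (hC : C = P ∪ {x : I | x ∉ P ∧ 0 ≤ F (x, 0)}) :
    IsCompact C ∧ P ⊆ interior C := by
  obtain rfl : Xs = (P ×ˢ {0})ᶜ := hXs
  subst hC
  have hK₀ := hFprop {0} isCompact_singleton
  have hK := hFprop (Icc 0 1) isCompact_Icc
  have hpos p hp := (eventually_nhdsGT_zero_pos_of_mem hP hΦP hη hK hFeq p hp).frequently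
  exact ⟨isCompact_core hP hFc hK₀ (bddAbove_snd_image_inter_preimage_Ici hΦP hη hK hFeq) hpos,
    subset_interior_core hFc hK₀ hpos⟩

/-- in the same setting, with f(x) := F(x,0) on I ∖ P and
C := P ∪ {f ≥ 0}, the set C is compact and P is contained in its interior.
Here [0,∞) is modelled by ℝ≥0. -/
theorem stmt14 {I : Type*} [TopologicalSpace I] [T2Space I]
    [LocallyConnectedSpace I] [FirstCountableTopology I]
    (P : Set I) (hP : IsClosed P)
    (Φ : I ≃ₜ I) (hΦP : Φ '' P = P)
    (η : ℝ≥0 ≃ₜ ℝ≥0) (hη : ∀ t : ℝ≥0, 0 < t → η t < t)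
    (Xs : Set (I × ℝ≥0)) (hXs : Xs = {z : I × ℝ≥0 | ¬(z.1 ∈ P ∧ z.2 = 0)})
    (F : I × ℝ≥0 → ℝ)
    (hFc : ContinuousOn F Xs)
    (hFprop : ∀ K : Set ℝ, IsCompact K → IsCompact (Xs ∩ F ⁻¹' K))
    (hFeq : ∀ z ∈ Xs, F (Φ z.1, η z.2) = F z + 1)
    (C : Set I) (hC : C = P ∪ {x : I | x ∉ P ∧ 0 ≤ F (x, 0)}) :
    IsCompact C ∧ P ⊆ interior C :=
  stmt14_general P hP Φ hΦP η hη Xs hXs F hFc hFprop hFeq C hC
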